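/- Let L ⊆ 𝒯(Σ) be a timed language, let p = (u,Λ), p' = (u',Λ'), p'' = (u'',Λ'') be elementary languages, and let R be a renaming equation over the variables of Λ and Λ'. For all timed words w ∈ p, w' ∈ p', w'' ∈ p'': if Rename(Sym_L(p·p''), R) ∧ Λ' logically implies Sym_L(p'·p''), if (V(w),V(w')) satisfies R, and if w·w'' ∈ L, then w'·w'' ∈ L. -/
import Mathlib


open scoped NNReal

namespace TimedLang

/-- Comparison relations appearing in timed conditions. -/
inductive Rel where
  | lt
  | le
  | ge
  | gt
deriving DecidableEq

/-- Semantics of a comparison `x ⋈ d` (with `d ∈ ℕ`). -/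
def Rel.holds : Rel → ℝ≥0 → ℕ → Prop
  | .lt, x, d => x < (d : ℝ≥0)
  | .le, x, d => x ≤ (d : ℝ≥0)
  | .ge, x, d => (d : ℝ≥0) ≤ x
  | .gt, x, d => (d : ℝ≥0) < x

/-- `sumT v i j` is the sum `T_{i,j} = τ_i + τ_{i+1} + ⋯ + τ_j` of the entries of `v`. -/
def sumT (v : List ℝ≥0) (i j : ℕ) : ℝ≥0 :=
  ((v.drop i).take (j + 1 - i)).sum

/-- An atomic constraint `T_{i,j} ⋈ d`. -/
structure TCAtom where
  i : ℕ
  j : ℕ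
  rel : Rel
  d : ℕ
deriving DecidableEq

/-- A timed condition: a finite conjunction of atomic constraints over variables τ₀, …, τₙ. -/
structure TCond where
  n : ℕ
  atoms : Finset TCAtom

/-- Well-formedness: every atom constrains a sum `T_{i,j}` with `i ≤ j ≤ n`. -/
def TCond.WF (c : TCond) : Prop := ∀ a ∈ c.atoms, a.i ≤ a.j ∧ a.j ≤ c.n

/-- A valuation (a list of n+1 nonnegative reals) satisfies a timed condition. -/
def TCond.Sat (c : TCond) (v : List ℝ≥0) : Prop :=
  v.length = c.n + 1 ∧ ∀ a ∈ c.atoms, a.rel.holds (sumT v a.i a.j) a.d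

/-- The set of satisfying valuations is bounded. -/
def TCond.Bounded (c : TCond) : Prop := ∃ M : ℝ≥0, ∀ v, c.Sat v → v.sum ≤ M

/-- A timed condition is simple if for each `T_{i,j}` it contains
`d < T_{i,j} < d+1` or `T_{i,j} = d` for some natural number `d`. -/
def TCond.Simple (c : TCond) : Prop :=
  ∀ i j : ℕ, i ≤ j → j ≤ c.n → ∃ d : ℕ,
    ((⟨i, j, Rel.gt, d⟩ : TCAtom) ∈ c.atoms ∧ (⟨i, j, Rel.lt, d + 1⟩ : TCAtom) ∈ c.atoms) ∨
    ((⟨i, j, Rel.ge, d⟩ : TCAtom) ∈ c.atoms ∧ (⟨i, j, Rel.le, d⟩ : TCAtom) ∈ c.atoms)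

/-- A timed condition is canonical if no inequality `T_{i,j} ⋈ d` can be strengthened or
added without changing its semantics: every semantically implied atomic constraint is
subsumed by an explicit atom on the same pair of indices. -/
def TCond.Canonical (c : TCond) : Prop :=
  ∀ a : TCAtom, a.i ≤ a.j → a.j ≤ c.n →
    (∀ v, c.Sat v → a.rel.holds (sumT v a.i a.j) a.d) →
    ∃ b ∈ c.atoms, b.i = a.i ∧ b.j = a.j ∧ ∀ x : ℝ≥0, b.rel.holds x b.d → a.rel.holds x a.d

/-- A timed word: an alternating sequence `τ₀ a₁ τ₁ a₂ … aₙ τₙ`,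
encoded as the word `a₁ … aₙ` together with the list of delays `τ₀, …, τₙ`. -/
structure TimedWord (A : Type) where
  word : List A
  delays : List ℝ≥0

/-- Well-formedness of a timed word: there are `n+1` delays for `n` letters.
`𝒯(Σ)` is the set of well-formed timed words. -/
def TimedWord.WF {A : Type} (w : TimedWord A) : Prop :=
  w.delays.length = w.word.length + 1

/-- Concatenation of timed words: the last delay of `w` is merged with the first
delay of `w'`. -/
def TimedWord.concat {A : Type} (w w' : TimedWord A) : TimedWord A :=
  ⟨w.word ++ w'.word,
    w.delays.dropLast ++ (w.delays.getLastD 0 + w'.delays.headD 0) :: w'.delays.tail⟩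

/-- `w` is a prefix of `w'` (with respect to concatenation of timed words). -/
def TimedWord.IsPrefix {A : Type} (w w' : TimedWord A) : Prop :=
  ∃ w'' : TimedWord A, w''.WF ∧ w.concat w'' = w'

/-- An elementary language `(u, Λ)`. -/
structure ElemLang (A : Type) where
  word : List A
  cond : TCond

/-- The set of timed words belonging to the elementary language. -/
def ElemLang.toSet {A : Type} (p : ElemLang A) : Set (TimedWord A) :=
  {w | w.word = p.word ∧ p.cond.Sat w.delays}

/-- Well-formedness of an elementary language: the timed condition is over
`τ₀, …, τ_{|u|}` and its set of satisfying valuations is bounded. -/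
def ElemLang.WF {A : Type} (p : ElemLang A) : Prop :=
  p.cond.n = p.word.length ∧ p.cond.WF ∧ p.cond.Bounded

/-- An elementary language is simple if it equals `(u, Λ')` for some simple and
canonical timed condition `Λ'`. -/
def ElemLang.IsSimple {A : Type} (p : ElemLang A) : Prop :=
  ∃ c' : TCond, c'.n = p.cond.n ∧ c'.WF ∧ c'.Simple ∧ c'.Canonical ∧
    ∀ v, p.cond.Sat v ↔ c'.Sat v

/-- `ℰ(Σ)`: the set of (well-formed) elementary languages over the alphabet `A`. -/
def allElem (A : Type) : Set (ElemLang A) := {p | p.WF}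

/-- `𝒮ℰ(Σ)`: the set of simple elementary languages over the alphabet `A`. -/
def simpleElem (A : Type) : Set (ElemLang A) := {p | p.WF ∧ p.IsSimple}

/-- `p` is a prefix of `p'` (as elementary languages). -/
def ElemLang.IsPrefixOf {A : Type} (p p' : ElemLang A) : Prop :=
  (∀ w' ∈ p'.toSet, ∃ w ∈ p.toSet, w.IsPrefix w') ∧
  (∀ w ∈ p.toSet, ∃ w' ∈ p'.toSet, w.IsPrefix w')

/-- Symbolic membership `Sym_L(p⋅s)` of the concatenation `p⋅s` in `L`, as the strongest
constraint over the two blocks of variables (those of `p` and those of `s`): the set of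
pairs of valuations of timed words `w ∈ p`, `w'' ∈ s` with `w⋅w'' ∈ L`. -/
def SymPair {A : Type} (L : Set (TimedWord A)) (p s : ElemLang A) :
    Set (List ℝ≥0 × List ℝ≥0) :=
  {vv | ∃ w w'' : TimedWord A, w ∈ p.toSet ∧ w'' ∈ s.toSet ∧
    w.delays = vv.1 ∧ w''.delays = vv.2 ∧ w.concat w'' ∈ L}

/-- A renaming equation over variable blocks `𝕋 = {τ₀,…,τₙ}` and `𝕋' = {τ'₀,…,τ'ₙ'}`:
a finite conjunction of equations `T_{i,n} = T'_{i',n'}`, given by the set of pairs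
`(i, i')`. -/
structure RenamingEq where
  n : ℕ
  n' : ℕ
  pairs : Finset (ℕ × ℕ)

def RenamingEq.WF (R : RenamingEq) : Prop := ∀ q ∈ R.pairs, q.1 ≤ R.n ∧ q.2 ≤ R.n'

/-- A pair of valuations satisfies a renaming equation. -/
def RenamingEq.Sat (R : RenamingEq) (v v' : List ℝ≥0) : Prop :=
  ∀ q ∈ R.pairs, sumT v q.1 R.n = sumT v' q.2 R.n'

/-- The same renaming equation, read in the other direction. -/
def RenamingEq.symm (R : RenamingEq) : RenamingEq :=
  ⟨R.n', R.n, R.pairs.image Prod.swap⟩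

/-- `Rename(φ, R)`: the constraint obtained from `φ` by replacing each sum `T_{i,n}`
by `T'_{i',n'}` according to the equations of `R` (semantic counterpart:
image of `φ` under the renaming relation). -/
def RenameC (R : RenamingEq) (φ : Set (List ℝ≥0 × List ℝ≥0)) :
    Set (List ℝ≥0 × List ℝ≥0) :=
  {vv | ∃ v : List ℝ≥0, R.Sat v vv.1 ∧ (v, vv.2) ∈ φ}

/-- `p ⊑^{s,R}_L p'`. -/
def Sqsub {A : Type} (L : Set (TimedWord A)) (s : ElemLang A) (R : RenamingEq)
    (p p' : ElemLang A) : Prop :=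
  (∀ w ∈ p.toSet, ∃ w' ∈ p'.toSet, R.Sat w.delays w'.delays) ∧
  (∀ vv : List ℝ≥0 × List ℝ≥0,
    (vv ∈ RenameC R (SymPair L p s) ∧ p'.cond.Sat vv.1) ↔
    (vv ∈ SymPair L p' s ∧ ∃ v : List ℝ≥0, R.Sat v vv.1 ∧ p.cond.Sat v))

/-- `p ~^{s,R}_L p'`. -/
def EquivOne {A : Type} (L : Set (TimedWord A)) (s : ElemLang A) (R : RenamingEq)
    (p p' : ElemLang A) : Prop :=
  Sqsub L s R p p' ∧ Sqsub L s R.symm p' p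

/-- `p ~^{S,R}_L p'`. -/
def EquivSR {A : Type} (L : Set (TimedWord A)) (S : Set (ElemLang A)) (R : RenamingEq)
    (p p' : ElemLang A) : Prop :=
  ∀ s ∈ S, EquivOne L s R p p'

/-- `p ~^S_L p'`. -/
def EquivS {A : Type} (L : Set (TimedWord A)) (S : Set (ElemLang A))
    (p p' : ElemLang A) : Prop :=
  ∃ R : RenamingEq, R.WF ∧ R.n = p.word.length ∧ R.n' = p'.word.length ∧
    EquivSR L S R p p'

/-- `Λ ∧ τ_{n+1} = 0`: the timed condition of a discrete immediate exterior/successor. -/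
def TCond.extendZero (c : TCond) : TCond :=
  ⟨c.n + 1, c.atoms ∪
    ({⟨c.n + 1, c.n + 1, Rel.le, 0⟩, ⟨c.n + 1, c.n + 1, Rel.ge, 0⟩} : Finset TCAtom)⟩

/-- The atoms of `c` that are part of an equation `T_{i,n} = d` on a suffix sum. -/
def TCond.suffixEqAtoms (c : TCond) : Finset TCAtom :=
  c.atoms.filter (fun a => a.j = c.n ∧
    ((a.rel = Rel.ge ∧ (⟨a.i, a.j, Rel.le, a.d⟩ : TCAtom) ∈ c.atoms) ∨
     (a.rel = Rel.le ∧ (⟨a.i, a.j, Rel.ge, a.d⟩ : TCAtom) ∈ c.atoms)))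

/-- The atoms of `c` of the form `T_{i,n} < d`. -/
def TCond.suffixLtAtoms (c : TCond) : Finset TCAtom :=
  c.atoms.filter (fun a => a.j = c.n ∧ a.rel = Rel.lt)

/-- `Λᵗ` for the continuous immediate exterior: every equation `T_{i,n} = d` is replaced
by `T_{i,n} > d` if such an equation exists; otherwise the inequality `T_{i,n} < d` with
the smallest index `i` is replaced by `T_{i,n} = d`. -/
def TCond.extTCond (c : TCond) : TCond :=
  if c.suffixEqAtoms.Nonempty then
    ⟨c.n, (c.atoms \ c.suffixEqAtoms) ∪
      c.suffixEqAtoms.image (fun a => (⟨a.i, a.j, Rel.gt, a.d⟩ : TCAtom))⟩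
  else if h : c.suffixLtAtoms.Nonempty then
    let i0 := (c.suffixLtAtoms.image TCAtom.i).min' (h.image TCAtom.i)
    let repl := c.suffixLtAtoms.filter (fun a => a.i = i0)
    ⟨c.n, ((c.atoms \ repl) ∪
      repl.image (fun a => (⟨a.i, a.j, Rel.ge, a.d⟩ : TCAtom))) ∪
      repl.image (fun a => (⟨a.i, a.j, Rel.le, a.d⟩ : TCAtom))⟩
  else c

/-- `i` indexes a suffix sum `T_{i,n}` whose fractional part is greatest
(w.r.t. the order `≺` determined by the condition). -/
def TCond.MaxFracIdx (c : TCond) (i : ℕ) : Prop :=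
  i ≤ c.n ∧ ∀ v, c.Sat v → ∀ k, k ≤ c.n →
    Int.fract ((sumT v k c.n : ℝ≥0) : ℝ) ≤ Int.fract ((sumT v i c.n : ℝ≥0) : ℝ)

open Classical in
/-- The strict atoms `d < T_{i,n} < d+1` on suffix sums with `≺`-greatest fractional part. -/
noncomputable def TCond.maxFracAtoms (c : TCond) : Finset TCAtom :=
  c.atoms.filter (fun a => a.j = c.n ∧ (a.rel = Rel.gt ∨ a.rel = Rel.lt) ∧ c.MaxFracIdx a.i)

/-- `Λᵗ` for the continuous successor: if `Λ` contains an equation `T_{i,n} = d`, all such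
equations are replaced by `d < T_{i,n} < d+1`; otherwise, for each `T_{i,n}` greatest in
terms of the fractional-part order, `d < T_{i,n} < d+1` is replaced by `T_{i,n} = d+1`. -/
noncomputable def TCond.sucTCond (c : TCond) : TCond :=
  if c.suffixEqAtoms.Nonempty then
    ⟨c.n, (c.atoms \ c.suffixEqAtoms) ∪ c.suffixEqAtoms.image (fun a =>
      if a.rel = Rel.ge then (⟨a.i, a.j, Rel.gt, a.d⟩ : TCAtom)
      else (⟨a.i, a.j, Rel.lt, a.d + 1⟩ : TCAtom))⟩
  else
    ⟨c.n, (c.atoms \ c.maxFracAtoms) ∪ c.maxFracAtoms.image (fun a =>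
      if a.rel = Rel.gt then (⟨a.i, a.j, Rel.ge, a.d + 1⟩ : TCAtom)
      else (⟨a.i, a.j, Rel.le, a.d⟩ : TCAtom))⟩

/-- The discrete immediate exterior `ext_a(p) = (u⋅a, Λ ∧ τ_{n+1} = 0)`. -/
def extA {A : Type} (p : ElemLang A) (a : A) : ElemLang A :=
  ⟨p.word ++ [a], p.cond.extendZero⟩

/-- The continuous immediate exterior `ext_t(p) = (u, Λᵗ)`. -/
def extT {A : Type} (p : ElemLang A) : ElemLang A :=
  ⟨p.word, p.cond.extTCond⟩

/-- The immediate exterior `ext(p) = ⋃_{a∈Σ} ext_a(p) ∪ ext_t(p)` (as a timed language). -/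
def extSet {A : Type} (p : ElemLang A) : Set (TimedWord A) :=
  (⋃ a : A, (extA p a).toSet) ∪ (extT p).toSet

/-- The exterior of a set of elementary languages (as a timed language). -/
def extOf {A : Type} (P : Set (ElemLang A)) : Set (TimedWord A) :=
  ⋃ p ∈ P, extSet p

/-- The union of a set of elementary languages, as a timed language. -/
def unionOf {A : Type} (P : Set (ElemLang A)) : Set (TimedWord A) :=
  ⋃ p ∈ P, p.toSet

/-- The discrete successor `Suc_a(p) = (u⋅a, Λ ∧ τ_{n+1} = 0)`. -/
def SucA {A : Type} (p : ElemLang A) (a : A) : ElemLang A :=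
  ⟨p.word ++ [a], p.cond.extendZero⟩

/-- The continuous successor `Suc_t(p) = (u, Λᵗ)`. -/
noncomputable def SucT {A : Type} (p : ElemLang A) : ElemLang A :=
  ⟨p.word, p.cond.sucTCond⟩

/-- `Suc(P) = ⋃_{p∈P} Suc(p)`, as a set of elementary languages. -/
def SucSet {A : Type} (P : Set (ElemLang A)) : Set (ElemLang A) :=
  {q | ∃ p ∈ P, (∃ a : A, q = SucA p a) ∨ q = SucT p}

/-- A timed language is chronometric if it is a finite union of pairwise disjoint
elementary languages. -/
def Chronometric {A : Type} (L : Set (TimedWord A)) : Prop :=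
  ∃ Ps : Set (ElemLang A), Ps.Finite ∧ (∀ p ∈ Ps, p.WF) ∧
    (Ps.Pairwise fun p q => Disjoint p.toSet q.toSet) ∧ L = unionOf Ps

/-- A set of elementary languages is prefix-closed if it contains (up to language
equality) all prefixes of its members. -/
def PrefixClosedSet {A : Type} (P : Set (ElemLang A)) : Prop :=
  ∀ p' ∈ P, ∀ p : ElemLang A, p.WF → p.IsPrefixOf p' → ∃ q ∈ P, q.toSet = p.toSet

/-- A tuple `(p, p', R)` defining a chronometric relational morphism. -/
structure MorphTuple (A : Type) where
  src : ElemLang A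
  tgt : ElemLang A
  ren : RenamingEq

/-- Well-formedness of a morphism tuple with respect to `P`. -/
def MorphTuple.WF {A : Type} (t : MorphTuple A) (P : Set (ElemLang A)) : Prop :=
  t.src.WF ∧ t.tgt.WF ∧ t.src.toSet ⊆ extOf P ∧ t.tgt.toSet ⊆ unionOf P ∧
  t.ren.WF ∧ t.ren.n = t.src.word.length ∧ t.ren.n' = t.tgt.word.length

/-- Well-formedness of a finite set `Φ` of tuples defining a chronometric relational
morphism: the sources are pairwise disjoint and their union is `ext(P) ∖ P`. -/
def PhiWF {A : Type} (P : Set (ElemLang A)) (Φ : Set (MorphTuple A)) : Prop :=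
  Φ.Finite ∧ (∀ t ∈ Φ, t.WF P) ∧
  (Φ.Pairwise fun t t' => Disjoint t.src.toSet t'.src.toSet) ∧
  (⋃ t ∈ Φ, t.src.toSet) = extOf P \ unionOf P

/-- The chronometric relational morphism `〚Φ〛 ⊆ 𝒯(Σ) × P`, defined inductively. -/
inductive MorphRel {A : Type} (P : Set (ElemLang A)) (Φ : Set (MorphTuple A)) :
    TimedWord A → TimedWord A → Prop where
  | refl (w : TimedWord A) (hw : w ∈ unionOf P) : MorphRel P Φ w w
  | base (t : MorphTuple A) (ht : t ∈ Φ) (w w' : TimedWord A)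
      (hw : w ∈ t.src.toSet) (hw' : w' ∈ t.tgt.toSet)
      (hR : t.ren.Sat w.delays w'.delays) : MorphRel P Φ w w'
  | trans (w wmid wfin wext : TimedWord A) (hw : w ∈ extOf P) (hext : wext.WF)
      (h1 : MorphRel P Φ w wmid)
      (h2 : MorphRel P Φ (wmid.concat wext) wfin) :
      MorphRel P Φ (w.concat wext) wfin

/-- A timed language is recognizable. -/
def Recognizable {A : Type} (L : Set (TimedWord A)) : Prop :=
  ∃ (P : Set (ElemLang A)) (F : Set (TimedWord A)) (Φ : Set (MorphTuple A)),
    P.Finite ∧ (∀ p ∈ P, p.WF) ∧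
    (P.Pairwise fun p q => Disjoint p.toSet q.toSet) ∧
    PrefixClosedSet P ∧
    Chronometric F ∧ F ⊆ unionOf P ∧
    PhiWF P Φ ∧
    (∀ t ∈ Φ, t.tgt.toSet ⊆ F ∨ t.tgt.toSet ∩ F = ∅) ∧
    L = {w | ∃ w' ∈ F, MorphRel P Φ w w'}

/-- A timed observation table `(P, S, T)`. -/
structure ObsTable (A : Type) where
  P : Set (ElemLang A)
  S : Set (ElemLang A)
  T : ElemLang A → ElemLang A → Set (List ℝ≥0 × List ℝ≥0)

/-- The row indices `P ∪ Suc(P)` of a timed observation table. -/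
def ObsTable.rows {A : Type} (O : ObsTable A) : Set (ElemLang A) :=
  O.P ∪ SucSet O.P

/-- Well-formedness of a timed observation table for the target language `L`:
`P` is a prefix-closed finite set of simple elementary languages, `S` is a finite set of
elementary languages, and `T` maps `(p, s) ∈ (P ∪ Suc(P)) × S` to `Sym_L(p⋅s)`. -/
def ObsTable.WF {A : Type} (O : ObsTable A) (L : Set (TimedWord A)) : Prop :=
  O.P.Finite ∧ (∀ p ∈ O.P, p.WF ∧ p.cond.Simple ∧ p.cond.Canonical) ∧
  (∀ p' ∈ O.P, ∀ p : ElemLang A, p.WF → p.IsPrefixOf p' → ∃ q ∈ O.P, q.toSet = p.toSet) ∧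
  O.S.Finite ∧ (∀ s ∈ O.S, s.WF) ∧
  (∀ p ∈ O.rows, ∀ s ∈ O.S, O.T p s = SymPair L p s)

/-- The timed observation table is closed. -/
def ObsTable.Closed {A : Type} (O : ObsTable A) (L : Set (TimedWord A)) : Prop :=
  ∀ p ∈ SucSet O.P, p ∉ O.P → ∃ p' ∈ O.P, EquivS L O.S p p'

/-- The timed observation table is consistent. -/
def ObsTable.Consistent {A : Type} (O : ObsTable A) (L : Set (TimedWord A)) : Prop :=
  ∀ p ∈ O.P, ∀ p' ∈ O.P, ∀ a : A,
    EquivS L O.S p p' → EquivS L O.S (SucA p a) (SucA p' a)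

/-- The timed observation table is exterior-consistent. -/
def ObsTable.ExtConsistent {A : Type} (O : ObsTable A) : Prop :=
  ∀ p ∈ O.P, SucT p ∉ O.P → (SucT p).toSet ⊆ (extT p).toSet

/-- The timed observation table is cohesive. -/
def ObsTable.Cohesive {A : Type} (O : ObsTable A) (L : Set (TimedWord A)) : Prop :=
  O.Closed L ∧ O.Consistent L ∧ O.ExtConsistent

/-- `Φ` contains, for each `p ∈ P` with `Suc_t(p) ∉ P`, a tuple `(ext_t(p), p', R)` with
`p' ∈ P` and `Suc_t(p) ~^{S,R}_L p'`, and for each `p ∈ P`, `a ∈ Σ` with `Suc_a(p) ∉ P`,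
a tuple `(ext_a(p), p', R)` with `p' ∈ P` and `Suc_a(p) ~^{S,R}_L p'`. -/
def GoodPhi {A : Type} (L : Set (TimedWord A)) (O : ObsTable A)
    (Φ : Set (MorphTuple A)) : Prop :=
  (∀ p ∈ O.P, SucT p ∉ O.P → ∃ t ∈ Φ, t.src = extT p ∧ t.tgt ∈ O.P ∧
    t.ren.WF ∧ t.ren.n = (SucT p).word.length ∧ t.ren.n' = t.tgt.word.length ∧
    EquivSR L O.S t.ren (SucT p) t.tgt) ∧
  (∀ p ∈ O.P, ∀ a : A, SucA p a ∉ O.P → ∃ t ∈ Φ, t.src = extA p a ∧ t.tgt ∈ O.P ∧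
    t.ren.WF ∧ t.ren.n = (SucA p a).word.length ∧ t.ren.n' = t.tgt.word.length ∧
    EquivSR L O.S t.ren (SucA p a) t.tgt)

/-- `F = {p ∈ P | p ⊆ L}`: the accepting prefixes of a timed observation table. -/
def ObsTable.accepting {A : Type} (O : ObsTable A) (L : Set (TimedWord A)) :
    Set (ElemLang A) :=
  {p | p ∈ O.P ∧ p.toSet ⊆ L}

/-- The hypothesis recognizable timed language defined by `(⋃P, ⋃F, Φ)`. -/
def HypLang {A : Type} (L : Set (TimedWord A)) (O : ObsTable A)
    (Φ : Set (MorphTuple A)) : Set (TimedWord A) :=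
  {w | ∃ w' ∈ unionOf (O.accepting L), MorphRel O.P Φ w w'}

/-- The range of values of the sum `T_{i,n}` determined by a timed condition. -/
def rangeOf (c : TCond) (i : ℕ) : Set ℝ≥0 :=
  {x | ∃ v, c.Sat v ∧ sumT v i c.n = x}

/-- The range of values of `T_{i,n} + T''_{0,i''}` under a constraint over two blocks. -/
def pairRangeOf (φ : Set (List ℝ≥0 × List ℝ≥0)) (i n i'' : ℕ) : Set ℝ≥0 :=
  {x | ∃ vv ∈ φ, sumT vv.1 i n + sumT vv.2 0 i'' = x}

/-- The sum `T_{i,|u|} + T''_{0,i''}` is non-trivial in `Sym_L(p⋅p'')`: its range under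
`Sym_L(p⋅p'')` differs from its range under `Λ ∧ Λ''`. -/
def NonTrivial {A : Type} (L : Set (TimedWord A)) (p pDD : ElemLang A)
    (i iDD : ℕ) : Prop :=
  pairRangeOf (SymPair L p pDD) i p.word.length iDD ≠
  pairRangeOf {vv | p.cond.Sat vv.1 ∧ pDD.cond.Sat vv.2} i p.word.length iDD

theorem statement0 {A : Type} [Finite A] (L : Set (TimedWord A)) (hL : ∀ w ∈ L, w.WF)
    (p p' p'' : ElemLang A) (hp : p.WF) (hp' : p'.WF) (hp'' : p''.WF)
    (R : RenamingEq) (hR : R.WF)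
    (hRn : R.n = p.word.length) (hRn' : R.n' = p'.word.length)
    (himp : ∀ vv : List ℝ≥0 × List ℝ≥0,
      vv ∈ RenameC R (SymPair L p p'') → p'.cond.Sat vv.1 → vv ∈ SymPair L p' p'')
    (w w' w'' : TimedWord A)
    (hw : w ∈ p.toSet) (hw' : w' ∈ p'.toSet) (hw'' : w'' ∈ p''.toSet)
    (hsat : R.Sat w.delays w'.delays)
    (hmem : w.concat w'' ∈ L) :
    w'.concat w'' ∈ L := by
  have hmemPair : ((w'.delays, w''.delays) : List ℝ≥0 × List ℝ≥0) ∈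
      RenameC R (SymPair L p p'') :=
    ⟨w.delays, hsat, ⟨w, w'', hw, hw'', rfl, rfl, hmem⟩⟩
  obtain ⟨x, x'', hx, hx'', hxd, hxd'', hxL⟩ := himp _ hmemPair hw'.2
  have hx1 : x = w' := by
    cases x; cases w'
    simp only [ElemLang.toSet, Set.mem_setOf_eq] at hx hw'
    simp_all
  have hx2 : x'' = w'' := by
    cases x''; cases w''
    simp only [ElemLang.toSet, Set.mem_setOf_eq] at hx'' hw''
    simp_all
  rwa [hx1, hx2] at hxL

end TimedLang
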